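/- Let G be a finite group, H ≤ G a subgroup, x_1 = 1, x_2, …, x_s a complete set of representatives for the double cosets of H in G, and let V be an irreducible finite-dimensional complex representation of G. Then ∑_{j=1}^s |H ∩ x_j H x_j⁻¹| · χ_V(q_j^∨) · χ_V(q_j) = |G| · dim_ℂ(V^H) / dim V, where q_j := (1/|H|) · ∑_{y ∈ Hx_jH} y and q_j^∨ := (1/|H|) · ∑_{y ∈ Hx_jH} y⁻¹. -/

import Mathlib

/-!
Let `P = |H|⁻¹ ∑_{h ∈ H} ρ(h)`, the projection onto `V^H`, and `F(g) = tr(P ρ(g))`, a function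
constant on double cosets. The map `(a, b) ↦ a x b` from `H × H` covers each point of `HxH`
exactly `|H ∩ xHx⁻¹|` times, and `∑_{a, b ∈ H} χ(a x b) = |H|² F(x)`; hence the `j`-th summand
equals `∑_{y ∈ Hx_jH} F(y⁻¹) F(y)`, and summing over the double cosets gives
`∑_{g ∈ G} tr(P ρ(g⁻¹)) tr(P ρ(g))`. Schur's lemma gives `∑_g tr(A ρ(g⁻¹)) ρ(g) = (|G| / dim V) A`
for every endomorphism `A`, so this sum is `|G| tr(P²) / dim V = |G| dim V^H / dim V`.
-/

open scoped Classical

/-- The double coset `HxH` as a finset. -/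
noncomputable def dosetFinset {G : Type*} [Group G] [Fintype G] (H : Subgroup G) (x : G) :
    Finset G :=
  {y : G | ∃ h ∈ H, ∃ h' ∈ H, y = h * x * h'}.toFinset

/-- `|H ∩ xHx⁻¹|`. -/
noncomputable def interConjCard {G : Type*} [Group G] [Fintype G] (H : Subgroup G) (x : G) :
    ℕ :=
  Nat.card {g : G // g ∈ H ∧ ∃ h ∈ H, g = x * h * x⁻¹}

/-- The character of a finite-dimensional representation. -/
noncomputable def repChar {G V : Type*} [Group G] [AddCommGroup V] [Module ℂ V]
    (ρ : Representation ℂ G V) (g : G) : ℂ :=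
  LinearMap.trace ℂ V (ρ g)

/-- Irreducibility: `V` is nonzero and has no proper nonzero `G`-invariant subspace. -/
def IsIrreducibleRep {G V : Type*} [Group G] [AddCommGroup V] [Module ℂ V]
    (ρ : Representation ℂ G V) : Prop :=
  Nontrivial V ∧ ∀ W : Submodule ℂ V, (∀ g : G, ∀ v ∈ W, ρ g v ∈ W) → W = ⊥ ∨ W = ⊤

/-- The subspace `V^H` of `H`-fixed vectors. -/
def fixedSubmodule {G V : Type*} [Group G] [AddCommGroup V] [Module ℂ V]
    (ρ : Representation ℂ G V) (H : Subgroup G) : Submodule ℂ V where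
  carrier := {v : V | ∀ h ∈ H, ρ h v = v}
  add_mem' := by
    intro a b ha hb h hh
    simp [map_add, ha h hh, hb h hh]
  zero_mem' := by
    intro h hh
    simp
  smul_mem' := by
    intro c v hv h hh
    simp [map_smul, hv h hh]

namespace IsIrreducibleRep

variable {G V : Type*} [Group G] [AddCommGroup V] [Module ℂ V] {ρ : Representation ℂ G V}

theorem isIrreducible (hρ : IsIrreducibleRep ρ) : ρ.IsIrreducible := by
  obtain ⟨hV, hsimple⟩ := hρ
  refine { exists_pair_ne := ⟨⊥, ⊤, fun h => ?_⟩, eq_bot_or_eq_top := fun W => ?_ }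
  · exact bot_ne_top (congrArg Subrepresentation.toSubmodule h)
  · rcases hsimple W.toSubmodule W.apply_mem_toSubmodule with h | h
    · exact Or.inl (Subrepresentation.ext (by rw [h]; rfl))
    · exact Or.inr (Subrepresentation.ext (by rw [h]; rfl))

variable [FiniteDimensional ℂ V]

theorem exists_eq_smul_one (hρ : IsIrreducibleRep ρ)
    (f : Module.End ℂ V) (hf : ∀ g, Commute (ρ g) f) : ∃ c : ℂ, f = c • 1 := by
  have := hρ.isIrreducible
  obtain ⟨c, hc⟩ :=
    Representation.IsIrreducible.algebraMap_intertwiningMap_bijective_of_isAlgClosed.2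
      (⟨f, fun g => (hf g).symm.eq⟩ : Representation.IntertwiningMap ρ ρ)
  exact ⟨c, congrArg (·.toLinearMap) hc.symm⟩

variable [Fintype G]

theorem sum_conj_eq_smul_one (hρ : IsIrreducibleRep ρ) (T : Module.End ℂ V) :
    ∑ g : G, ρ g * T * ρ g⁻¹
      = ((Fintype.card G : ℂ) * LinearMap.trace ℂ V T / Module.finrank ℂ V) • 1 := by
  have : Nontrivial V := hρ.1
  obtain ⟨c, hc⟩ := hρ.exists_eq_smul_one (∑ g : G, ρ g * T * ρ g⁻¹) fun a => by
    simp only [Commute, SemiconjBy, Finset.mul_sum, Finset.sum_mul]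
    refine Fintype.sum_equiv (Equiv.mulLeft a) _ _ fun g => ?_
    simp only [Equiv.coe_mulLeft, mul_inv_rev, map_mul, mul_assoc, ← map_mul ρ a⁻¹ a,
      inv_mul_cancel, map_one, mul_one]
  have htrace_conj (g : G) :
      LinearMap.trace ℂ V (ρ g * T * ρ g⁻¹) = LinearMap.trace ℂ V T := by
    rw [LinearMap.trace_mul_comm, ← mul_assoc, ← map_mul, inv_mul_cancel, map_one, one_mul]
  have htrace : c * Module.finrank ℂ V = Fintype.card G * LinearMap.trace ℂ V T := by
    have h := congrArg (LinearMap.trace ℂ V) hc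
    simp only [map_sum, htrace_conj, Finset.sum_const, Finset.card_univ, nsmul_eq_mul, map_smul,
      LinearMap.trace_one, smul_eq_mul] at h
    exact h.symm
  rw [hc, ← htrace, mul_div_cancel_right₀ _ (by simp [Module.finrank_pos.ne'])]

theorem sum_smul_eq_smul_smulRight (hρ : IsIrreducibleRep ρ) (φ : Module.Dual ℂ V) (w : V) :
    ∑ g : G, φ (ρ g⁻¹ w) • ρ g
      = ((Fintype.card G : ℂ) / Module.finrank ℂ V) • φ.smulRight w := by
  ext v
  have h := congrArg (· w) (hρ.sum_conj_eq_smul_one (φ.smulRight v))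
  simp only [LinearMap.sum_apply, Module.End.mul_apply, LinearMap.smulRight_apply, map_smul,
    LinearMap.trace_smulRight, LinearMap.smul_apply, Module.End.one_apply] at h
  simp only [LinearMap.sum_apply, LinearMap.smul_apply, LinearMap.smulRight_apply, h, smul_smul]
  ring_nf

theorem sum_trace_mul_smul (hρ : IsIrreducibleRep ρ) (A : Module.End ℂ V) :
    ∑ g : G, LinearMap.trace ℂ V (A * ρ g⁻¹) • ρ g
      = ((Fintype.card G : ℂ) / Module.finrank ℂ V) • A := by
  obtain ⟨t, rfl⟩ := (dualTensorHom_bijective (R := ℂ) (M := V) (N := V)).2 A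
  induction t using TensorProduct.induction_on with
  | zero => simp
  | tmul φ w =>
    rw [show dualTensorHom ℂ V V (φ ⊗ₜ w) = φ.smulRight w from rfl,
      ← hρ.sum_smul_eq_smul_smulRight]
    congr! 2 with g
    rw [show φ.smulRight w * ρ g⁻¹ = (φ ∘ₗ ρ g⁻¹).smulRight w from rfl,
      LinearMap.trace_smulRight]
    rfl
  | add t u ht hu =>
    simp only [map_add, add_mul, add_smul, Finset.sum_add_distrib, smul_add, ht, hu]

theorem sum_trace_mul_trace (hρ : IsIrreducibleRep ρ) (A B : Module.End ℂ V) :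
    ∑ g : G, LinearMap.trace ℂ V (A * ρ g⁻¹) * LinearMap.trace ℂ V (B * ρ g)
      = Fintype.card G * LinearMap.trace ℂ V (B * A) / Module.finrank ℂ V := by
  have h := congrArg (fun X => LinearMap.trace ℂ V (B * X)) (hρ.sum_trace_mul_smul A)
  simp only [Finset.mul_sum, mul_smul_comm, map_sum, map_smul, smul_eq_mul] at h
  rw [h]
  ring

end IsIrreducibleRep

section SubgroupAverage

variable {G V : Type*} [Group G] [AddCommGroup V] [Module ℂ V] (ρ : Representation ℂ G V)
  (H : Subgroup G) [Fintype H]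

noncomputable def subgroupAverage : Module.End ℂ V :=
  (Nat.card H : ℂ)⁻¹ • ∑ h : H, ρ h

variable {H}

theorem mul_subgroupAverage {h : G} (hh : h ∈ H) :
    ρ h * subgroupAverage ρ H = subgroupAverage ρ H := by
  rw [subgroupAverage, mul_smul_comm, Finset.mul_sum]
  congr 1
  exact Fintype.sum_equiv (Equiv.mulLeft ⟨h, hh⟩) _ _ fun k => by simp

theorem subgroupAverage_mul {h : G} (hh : h ∈ H) :
    subgroupAverage ρ H * ρ h = subgroupAverage ρ H := by
  rw [subgroupAverage, smul_mul_assoc, Finset.sum_mul]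
  congr 1
  exact Fintype.sum_equiv (Equiv.mulRight ⟨h, hh⟩) _ _ fun k => by simp

variable (H)

theorem subgroupAverage_mul_self :
    subgroupAverage ρ H * subgroupAverage ρ H = subgroupAverage ρ H := by
  conv_lhs => enter [1]; rw [subgroupAverage]
  rw [smul_mul_assoc, Finset.sum_mul, Finset.sum_congr rfl fun h _ => mul_subgroupAverage ρ h.2,
    Finset.sum_const, Finset.card_univ, ← Nat.card_eq_fintype_card, ← Nat.cast_smul_eq_nsmul ℂ,
    smul_smul, inv_mul_cancel₀ (by simp), one_smul]

theorem trace_subgroupAverage [FiniteDimensional ℂ V] :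
    LinearMap.trace ℂ V (subgroupAverage ρ H) = Module.finrank ℂ (fixedSubmodule ρ H) := by
  have : Invertible (Nat.card H : ℂ) := invertibleOfNonzero (by simp)
  have hfixed : Representation.invariants (ρ.comp H.subtype) = fixedSubmodule ρ H := by
    ext v
    simp [fixedSubmodule]
  rw [← hfixed, ← Representation.card_inv_mul_sum_char_eq_finrank, subgroupAverage, map_smul,
    map_sum, smul_eq_mul]
  rfl

noncomputable def averagedChar (g : G) : ℂ :=
  LinearMap.trace ℂ V (subgroupAverage ρ H * ρ g)

variable {H}

theorem averagedChar_mul_mul {a b : G} (ha : a ∈ H) (hb : b ∈ H) (g : G) :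
    averagedChar ρ H (a * g * b) = averagedChar ρ H g := by
  rw [averagedChar, map_mul ρ, map_mul ρ, ← mul_assoc, ← mul_assoc, subgroupAverage_mul ρ ha,
    LinearMap.trace_mul_comm, ← mul_assoc, mul_subgroupAverage ρ hb, averagedChar]

variable (H)

theorem sum_repChar_mul_mul (g : G) :
    ∑ p : H × H, repChar ρ (p.1 * g * p.2) = (Nat.card H : ℂ) ^ 2 * averagedChar ρ H g := by
  have hsum : ∑ h : H, ρ h = (Nat.card H : ℂ) • subgroupAverage ρ H := by
    rw [subgroupAverage, smul_smul, mul_inv_cancel₀ (by simp), one_smul]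
  have hprod : ∑ p : H × H, ρ (p.1 * g * p.2) = (∑ h : H, ρ h) * ρ g * ∑ h : H, ρ h := by
    simp only [Fintype.sum_prod_type, Finset.sum_mul, Finset.mul_sum, map_mul]
    exact Finset.sum_comm
  calc ∑ p : H × H, repChar ρ (p.1 * g * p.2)
      = LinearMap.trace ℂ V (∑ p : H × H, ρ (p.1 * g * p.2)) := (map_sum _ _ _).symm
    _ = LinearMap.trace ℂ V ((Nat.card H : ℂ) ^ 2 •
          (subgroupAverage ρ H * ρ g * subgroupAverage ρ H)) := by
      rw [hprod, hsum]
      simp only [smul_mul_assoc, mul_smul_comm, smul_smul, sq]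
    _ = (Nat.card H : ℂ) ^ 2 * averagedChar ρ H g := by
      rw [map_smul, LinearMap.trace_mul_comm, ← mul_assoc, subgroupAverage_mul_self, smul_eq_mul,
        averagedChar]

end SubgroupAverage

section DoubleCoset

variable {G : Type*} [Group G] [Fintype G] (H : Subgroup G)

theorem mem_dosetFinset {x y : G} :
    y ∈ dosetFinset H x ↔ ∃ h ∈ H, ∃ h' ∈ H, y = h * x * h' := by
  simp [dosetFinset]

theorem interConjCard_pos (x : G) : 0 < interConjCard H x :=
  Nat.card_pos_iff.2 ⟨⟨⟨1, H.one_mem, 1, H.one_mem, by group⟩⟩, inferInstance⟩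

theorem card_stabilizer_eq_interConjCard (x : G) :
    Nat.card {p : H × H // (p.1 : G) * x * p.2 = x} = interConjCard H x := by
  refine Nat.card_congr
    { toFun := fun ⟨(a, b), hab⟩ => ⟨a, a.2, b⁻¹, b⁻¹.2, ?_⟩
      invFun := fun ⟨g, hg, hconj⟩ => ⟨(⟨g, hg⟩, ⟨x⁻¹ * g⁻¹ * x, ?_⟩), ?_⟩
      left_inv := fun ⟨(a, b), hab⟩ => ?_
      right_inv := fun ⟨_, _, _⟩ => rfl }
  · exact eq_mul_inv_of_mul_eq (eq_mul_inv_of_mul_eq hab)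
  · obtain ⟨h, hh, rfl⟩ := hconj
    rw [show x⁻¹ * (x * h * x⁻¹)⁻¹ * x = h⁻¹ by group]
    exact H.inv_mem hh
  · group
  · have hb : (b : G) = x⁻¹ * (a : G)⁻¹ * x := by rw [eq_inv_mul_of_mul_eq hab, mul_inv_rev]
    ext <;> simp [hb]

theorem card_fiber_mul_mul_eq_interConjCard {x y : G} (hy : y ∈ dosetFinset H x) :
    Nat.card {p : H × H // (p.1 : G) * x * p.2 = y} = interConjCard H x := by
  obtain ⟨a, ha, b, hb, rfl⟩ := (mem_dosetFinset H).1 hy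
  rw [← card_stabilizer_eq_interConjCard]
  refine Nat.card_congr (Equiv.subtypeEquiv
    ((Equiv.mulLeft (⟨a, ha⟩ : H)⁻¹).prodCongr (Equiv.mulRight (⟨b, hb⟩ : H)⁻¹)) fun p => ?_)
  simp only [Equiv.prodCongr_apply, Prod.map, Equiv.coe_mulLeft, Equiv.coe_mulRight,
    Subgroup.coe_mul, InvMemClass.coe_inv]
  rw [show a⁻¹ * p.1 * x * (p.2 * b⁻¹) = a⁻¹ * (p.1 * x * p.2) * b⁻¹ by group,
    mul_inv_eq_iff_eq_mul, inv_mul_eq_iff_eq_mul, mul_assoc a]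

theorem sum_prod_mul_mul {M : Type*} [AddCommMonoid M] (f : G → M) (x : G) :
    ∑ p : H × H, f (p.1 * x * p.2) = interConjCard H x • ∑ y ∈ dosetFinset H x, f y := by
  rw [← Finset.sum_fiberwise_of_maps_to (g := fun p : H × H => (p.1 : G) * x * p.2)
    (t := dosetFinset H x) fun p _ => (mem_dosetFinset H).2 ⟨p.1, p.1.2, p.2, p.2.2, rfl⟩,
    Finset.smul_sum]
  refine Finset.sum_congr rfl fun y hy => ?_
  rw [Finset.sum_congr rfl fun p hp => by rw [(Finset.mem_filter.1 hp).2], Finset.sum_const,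
    ← card_fiber_mul_mul_eq_interConjCard H hy, Nat.card_eq_fintype_card, Fintype.card_subtype]

theorem sum_prod_inv_mul_mul {M : Type*} [AddCommMonoid M] (f : G → M) (x : G) :
    ∑ p : H × H, f (p.1 * x * p.2)⁻¹ = ∑ p : H × H, f (p.1 * x⁻¹ * p.2) :=
  Fintype.sum_equiv ((Equiv.prodComm H H).trans ((Equiv.inv H).prodCongr (Equiv.inv H))) _ _
    fun p => by simp [mul_assoc]

theorem sum_sum_dosetFinset_eq_sum {ι M : Type*} [Fintype ι] [AddCommMonoid M] (x : ι → G)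
    (hreps : ∀ g : G, ∃! i : ι, ∃ h ∈ H, ∃ h' ∈ H, g = h * x i * h') (f : G → M) :
    ∑ i, ∑ y ∈ dosetFinset H (x i), f y = ∑ g, f g := by
  choose idx hidx using hreps
  have hfiber (i : ι) : dosetFinset H (x i) = Finset.univ.filter fun g => idx g = i := by
    ext g
    rw [mem_dosetFinset, Finset.mem_filter_univ]
    exact ⟨fun hg => ((hidx g).2 i hg).symm, fun hg => hg ▸ (hidx g).1⟩
  simp only [hfiber]
  exact Finset.sum_fiberwise _ _ _

end DoubleCoset

section Hecke

variable {G V : Type*} [Group G] [Fintype G] [AddCommGroup V] [Module ℂ V]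
  (ρ : Representation ℂ G V) (H : Subgroup G)

theorem sum_dosetFinset_averagedChar_inv_mul_averagedChar (x : G) :
    ∑ y ∈ dosetFinset H x, averagedChar ρ H y⁻¹ * averagedChar ρ H y
      = (interConjCard H x : ℂ) *
          ((Nat.card H : ℂ)⁻¹ * ∑ y ∈ dosetFinset H x, repChar ρ y⁻¹) *
          ((Nat.card H : ℂ)⁻¹ * ∑ y ∈ dosetFinset H x, repChar ρ y) := by
  set m : ℂ := (interConjCard H x : ℂ)
  set c : ℂ := (Nat.card H : ℂ)
  have hm : m ≠ 0 := by simp [m, (interConjCard_pos H x).ne']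
  have hc : c ≠ 0 := by simp [c]
  have hchar : m * ∑ y ∈ dosetFinset H x, repChar ρ y = c ^ 2 * averagedChar ρ H x := by
    rw [← nsmul_eq_mul, ← sum_prod_mul_mul, sum_repChar_mul_mul]
  have hchar_inv :
      m * ∑ y ∈ dosetFinset H x, repChar ρ y⁻¹ = c ^ 2 * averagedChar ρ H x⁻¹ := by
    rw [← nsmul_eq_mul, ← sum_prod_mul_mul H (fun y => repChar ρ y⁻¹),
      sum_prod_inv_mul_mul H (repChar ρ), sum_repChar_mul_mul]
  have haveraged : m * ∑ y ∈ dosetFinset H x, averagedChar ρ H y⁻¹ * averagedChar ρ H y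
      = c ^ 2 * (averagedChar ρ H x⁻¹ * averagedChar ρ H x) := by
    have hconst (p : H × H) :
        averagedChar ρ H (p.1 * x * p.2)⁻¹ * averagedChar ρ H (p.1 * x * p.2)
          = averagedChar ρ H x⁻¹ * averagedChar ρ H x := by
      rw [mul_inv_rev, mul_inv_rev, ← mul_assoc,
        averagedChar_mul_mul ρ (inv_mem p.2.2) (inv_mem p.1.2), averagedChar_mul_mul ρ p.1.2 p.2.2]
    rw [← nsmul_eq_mul,
      ← sum_prod_mul_mul H (fun y => averagedChar ρ H y⁻¹ * averagedChar ρ H y),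
      Finset.sum_congr rfl fun p _ => hconst p, Finset.sum_const, Finset.card_univ,
      Fintype.card_prod, ← Nat.card_eq_fintype_card, nsmul_eq_mul]
    push_cast
    ring
  apply mul_left_cancel₀ hm
  calc m * ∑ y ∈ dosetFinset H x, averagedChar ρ H y⁻¹ * averagedChar ρ H y
      = c ^ 2 * (averagedChar ρ H x⁻¹ * averagedChar ρ H x) := haveraged
    _ = c⁻¹ ^ 2 * (c ^ 2 * averagedChar ρ H x⁻¹) * (c ^ 2 * averagedChar ρ H x) := by
      field_simp
    _ = m * (m * (c⁻¹ * ∑ y ∈ dosetFinset H x, repChar ρ y⁻¹) *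
          (c⁻¹ * ∑ y ∈ dosetFinset H x, repChar ρ y)) := by
      rw [← hchar_inv, ← hchar]
      ring

end Hecke

theorem hecke_orthogonality_self_general {G V : Type*} [Group G] [Fintype G]
    [AddCommGroup V] [Module ℂ V] [FiniteDimensional ℂ V]
    (ρ : Representation ℂ G V) (hirr : IsIrreducibleRep ρ)
    (H : Subgroup G) (s : ℕ) (x : Fin s → G)
    (hreps : ∀ g : G, ∃! i : Fin s, ∃ h ∈ H, ∃ h' ∈ H, g = h * x i * h') :
    ∑ j : Fin s,
        (interConjCard H (x j) : ℂ) *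
          ((Nat.card H : ℂ)⁻¹ * ∑ y ∈ dosetFinset H (x j), repChar ρ y⁻¹) *
          ((Nat.card H : ℂ)⁻¹ * ∑ y ∈ dosetFinset H (x j), repChar ρ y)
      = (Fintype.card G : ℂ) * (Module.finrank ℂ (fixedSubmodule ρ H) : ℂ) /
          (Module.finrank ℂ V : ℂ) := by
  calc _ = ∑ j : Fin s, ∑ y ∈ dosetFinset H (x j),
          averagedChar ρ H y⁻¹ * averagedChar ρ H y :=
        Finset.sum_congr rfl fun j _ =>
          (sum_dosetFinset_averagedChar_inv_mul_averagedChar ρ H (x j)).symm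
    _ = ∑ g : G, averagedChar ρ H g⁻¹ * averagedChar ρ H g :=
        sum_sum_dosetFinset_eq_sum H x hreps _
    _ = Fintype.card G * LinearMap.trace ℂ V (subgroupAverage ρ H * subgroupAverage ρ H) /
          Module.finrank ℂ V :=
        hirr.sum_trace_mul_trace _ _
    _ = _ := by rw [subgroupAverage_mul_self, trace_subgroupAverage]

/-- orthogonality relation for an irreducible representation `V`:
`∑_j |H ∩ x_j H x_j⁻¹| · χ_V(q_j^∨) · χ_V(q_j) = |G| · dim V^H / dim V`, where
`χ_V(q_j^∨) = (1/|H|) ∑_{y ∈ H x_j H} χ_V(y⁻¹)` and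
`χ_V(q_j) = (1/|H|) ∑_{y ∈ H x_j H} χ_V(y)`. -/
theorem hecke_orthogonality_self {G V : Type*} [Group G] [Fintype G]
    [AddCommGroup V] [Module ℂ V] [FiniteDimensional ℂ V]
    (ρ : Representation ℂ G V) (hirr : IsIrreducibleRep ρ)
    (H : Subgroup G) (s : ℕ) (hs : 0 < s) (x : Fin s → G) (hx1 : x ⟨0, hs⟩ = 1)
    (hreps : ∀ g : G, ∃! i : Fin s, ∃ h ∈ H, ∃ h' ∈ H, g = h * x i * h') :
    ∑ j : Fin s,
        (interConjCard H (x j) : ℂ) *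
          ((Nat.card H : ℂ)⁻¹ * ∑ y ∈ dosetFinset H (x j), repChar ρ y⁻¹) *
          ((Nat.card H : ℂ)⁻¹ * ∑ y ∈ dosetFinset H (x j), repChar ρ y)
      = (Fintype.card G : ℂ) * (Module.finrank ℂ (fixedSubmodule ρ H) : ℂ) /
          (Module.finrank ℂ V : ℂ) :=
  hecke_orthogonality_self_general ρ hirr H s x hreps
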